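/- Let f : ℝ^d → ℝ be twice continuously differentiable with μI ⪯ ∇²f(x) ⪯ LI for all x, where 0 < μ ≤ L, and let 0 < γ ≤ 1/L. Let φ_1, …, φ_d > 0 with Σ φ_i = 1, let h > 0 satisfy h/φ_i ≤ 1/20 for every i, and set h_i = h/φ_i. Fix x, x̃, w, w̃ ∈ ℝ^d, write a = x̃ − x, b = w̃ − w, g = ∇f(x̃) − ∇f(x), and for each i define A_i = (h_i + e^{−2h_i}) b_i + (1 − h_i − e^{−2h_i}) a_i − (γ/2)(1 − e^{−2h_i}) g_i, C_i = (1 − h_i) a_i + h_i b_i, and K_i = (A_i − b_i) b_i + (C_i − a_i) a_i. Then Σ_{i=1}^d φ_i K_i ≤ (−γμh/2 + 3h²/min_i φ_i) (‖a‖² + ‖b‖²). -/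

import Mathlib

open scoped RealInnerProductSpace

/-!
By the mean value theorem in integral form, `∇f(x̃) − ∇f(x) = T a` where `T` is the average of
the Hessian along the segment from `x` to `x̃`, a symmetric operator with `μ ≤ T ≤ L`.
With `r_i = e^{−2h_i} − 1 + 2h_i` and `φ_i h_i = h`, the weighted sum splits exactly as
`−h (‖b − a‖² + γ⟪T a, b⟫) + Σ φ_i r_i (b − a + (γ/2) g)_i b_i`.
Co-coercivity of `T − μ`, i.e. `‖(T − μ) a‖² ≤ (L − μ) ⟪(T − μ) a, a⟫`, bounds the first part by
`−γμh/2 (‖a‖² + ‖b‖²)`. The remainder is of order `h² / min φ` since `0 ≤ r_i ≤ 2 h_i²` and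
`γ ‖g‖ ≤ γ L ‖a‖ ≤ ‖a‖`.
-/

theorem Real.abs_exp_sub_one_sub_id_le_of_nonpos {x : ℝ} (hx : x ≤ 0) :
    |Real.exp x - 1 - x| ≤ x ^ 2 / 2 := by
  have hmono : Monotone fun y => Real.exp y - (1 + y + y ^ 2 / 2) := by
    refine monotone_of_deriv_nonneg (by fun_prop) fun y => ?_
    have hderiv : HasDerivAt (fun y => Real.exp y - (1 + y + y ^ 2 / 2))
        (Real.exp y - (1 + y)) y :=
      ((Real.hasDerivAt_exp y).sub (((hasDerivAt_id y).const_add 1).add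
        ((hasDerivAt_pow 2 y).div_const 2))).congr_deriv (by norm_num)
    rw [hderiv.deriv]
    linarith [Real.add_one_le_exp y]
  have := hmono hx
  simp only [Real.exp_zero] at this
  rw [abs_le]
  constructor <;> nlinarith [Real.add_one_le_exp x]

section InnerProductSpace

variable {E : Type*} [NormedAddCommGroup E] [InnerProductSpace ℝ E]

theorem LinearMap.IsPositive.inner_sq_le_mul {M : E →ₗ[ℝ] E} (hM : M.IsPositive) (u v : E) :
    ⟪M u, v⟫ ^ 2 ≤ ⟪M u, u⟫ * ⟪M v, v⟫ := by
  have hquad : ∀ s : ℝ, 0 ≤ ⟪M v, v⟫ * (s * s) + 2 * ⟪M u, v⟫ * s + ⟪M u, u⟫ := fun s => by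
    have h := hM.inner_nonneg_left (u + s • v)
    have hsym : ⟪M v, u⟫ = ⟪M u, v⟫ := by rw [hM.isSymmetric, real_inner_comm]
    simp only [map_add, map_smul, inner_add_left, inner_add_right, real_inner_smul_left,
      real_inner_smul_right, hsym] at h
    linarith
  have := discrim_le_zero hquad
  rw [discrim] at this
  nlinarith

theorem LinearMap.IsPositive.norm_apply_sq_le {M : E →ₗ[ℝ] E} (hM : M.IsPositive) {c : ℝ}
    (hc : ∀ v, ⟪M v, v⟫ ≤ c * ‖v‖ ^ 2) (a : E) : ‖M a‖ ^ 2 ≤ c * ⟪M a, a⟫ := by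
  have hcs := hM.inner_sq_le_mul a (M a)
  rw [real_inner_self_eq_norm_sq] at hcs
  rcases eq_or_ne (M a) 0 with h0 | h0
  · simp [h0]
  · have hpos : 0 < ‖M a‖ := norm_pos_iff.mpr h0
    nlinarith [mul_le_mul_of_nonneg_left (hc (M a)) (hM.inner_nonneg_left a), pow_pos hpos 2]

variable {T : E →ₗ[ℝ] E} {μ L : ℝ}

theorem LinearMap.IsSymmetric.smul_one_le (hT : T.IsSymmetric)
    (h : ∀ v, μ * ‖v‖ ^ 2 ≤ ⟪T v, v⟫) : μ • 1 ≤ T := by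
  refine (LinearMap.isPositive_iff _).2
    ⟨hT.sub (LinearMap.IsSymmetric.one.smul rfl), fun v => ?_⟩
  simp only [LinearMap.sub_apply, LinearMap.smul_apply, Module.End.one_apply, inner_sub_left,
    real_inner_smul_left, real_inner_self_eq_norm_sq]
  linarith [h v]

theorem LinearMap.IsSymmetric.le_smul_one (hT : T.IsSymmetric)
    (h : ∀ v, ⟪T v, v⟫ ≤ L * ‖v‖ ^ 2) : T ≤ L • 1 := by
  refine (LinearMap.isPositive_iff _).2
    ⟨(LinearMap.IsSymmetric.one.smul rfl).sub hT, fun v => ?_⟩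
  simp only [LinearMap.sub_apply, LinearMap.smul_apply, Module.End.one_apply, inner_sub_left,
    real_inner_smul_left, real_inner_self_eq_norm_sq]
  linarith [h v]

theorem LinearMap.inner_apply_sub_smul_le_of_le_smul_one (hTL : T ≤ L • 1) (v : E) :
    ⟪T v - μ • v, v⟫ ≤ (L - μ) * ‖v‖ ^ 2 := by
  have h := hTL.inner_nonneg_left v
  simp only [LinearMap.sub_apply, LinearMap.smul_apply, Module.End.one_apply, inner_sub_left,
    real_inner_smul_left, real_inner_self_eq_norm_sq] at h ⊢
  linarith

theorem LinearMap.norm_apply_sub_smul_sq_le (hμT : μ • 1 ≤ T) (hTL : T ≤ L • 1) (a : E) :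
    ‖T a - μ • a‖ ^ 2 ≤ (L - μ) * ⟪T a - μ • a, a⟫ :=
  hμT.norm_apply_sq_le (LinearMap.inner_apply_sub_smul_le_of_le_smul_one hTL) a

theorem LinearMap.norm_apply_le_of_le_smul_one (hμ : 0 ≤ μ) (hμL : μ ≤ L) (hμT : μ • 1 ≤ T)
    (hTL : T ≤ L • 1) (a : E) : ‖T a‖ ≤ L * ‖a‖ := by
  set p := T a - μ • a
  have hp : ‖p‖ ^ 2 ≤ (L - μ) * ⟪p, a⟫ := LinearMap.norm_apply_sub_smul_sq_le hμT hTL a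
  have hpa : ⟪p, a⟫ ≤ ‖p‖ * ‖a‖ := real_inner_le_norm p a
  have hp' : ‖p‖ ≤ (L - μ) * ‖a‖ := by
    by_contra! h
    have hpos : 0 < ‖p‖ := lt_of_le_of_lt (by positivity) h
    nlinarith [mul_le_mul_of_nonneg_left hpa (sub_nonneg.2 hμL), mul_lt_mul_of_pos_right h hpos]
  calc ‖T a‖ = ‖p + μ • a‖ := by rw [sub_add_cancel]
    _ ≤ ‖p‖ + μ * ‖a‖ := by
      grw [norm_add_le, norm_smul, Real.norm_of_nonneg hμ]
    _ ≤ L * ‖a‖ := by linarith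

theorem LinearMap.mul_norm_sq_add_norm_sq_le_norm_sub_sq_add_inner (hμ : 0 ≤ μ) (hμL : μ ≤ L)
    {γ : ℝ} (hγ : 0 ≤ γ) (hγL : γ * L ≤ 1) (hμT : μ • 1 ≤ T) (hTL : T ≤ L • 1) (a b : E) :
    γ * μ / 2 * (‖a‖ ^ 2 + ‖b‖ ^ 2) ≤ ‖b - a‖ ^ 2 + γ * ⟪T a, b⟫ := by
  set p := T a - μ • a
  have hpa : 0 ≤ ⟪p, a⟫ := hμT.inner_nonneg_left a
  have hp : ‖p‖ ^ 2 ≤ (L - μ) * ⟪p, a⟫ := LinearMap.norm_apply_sub_smul_sq_le hμT hTL a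
  have hsq : 0 ≤ ‖b - a + γ • p‖ ^ 2 := sq_nonneg _
  have hTa : T a = p + μ • a := (sub_add_cancel _ _).symm
  rw [norm_add_sq_real, norm_smul, Real.norm_of_nonneg hγ, real_inner_smul_right] at hsq
  have hba : ‖b - a‖ ^ 2 = ‖b‖ ^ 2 - 2 * ⟪a, b⟫ + ‖a‖ ^ 2 := by
    rw [norm_sub_sq_real, real_inner_comm]
  rw [hTa, inner_add_left, real_inner_smul_left]
  rw [inner_sub_left, real_inner_comm p b, real_inner_comm p a] at hsq
  have hγμ : γ * μ ≤ 1 := (mul_le_mul_of_nonneg_left hμL hγ).trans hγL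
  have hγLμ : γ * (L - μ) ≤ 2 := by nlinarith [mul_nonneg hγ hμ]
  -- with `δ = b - a`, the gap is `‖δ + γ p‖² / 2 + (1 - γμ) ‖δ‖² / 2 + γ ⟪p, a⟫ - γ² ‖p‖² / 2`
  nlinarith [mul_nonneg (sub_nonneg.2 hγμ) (sq_nonneg ‖b - a‖),
    mul_nonneg (mul_nonneg hγ hpa) (sub_nonneg.2 hγLμ),
    mul_le_mul_of_nonneg_left hp (sq_nonneg γ)]

end InnerProductSpace

section Hessian

variable {E : Type*} [NormedAddCommGroup E] [InnerProductSpace ℝ E] [CompleteSpace E]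
  {f : E → ℝ}

theorem ContDiff.gradient_of_two (hf : ContDiff ℝ 2 f) : ContDiff ℝ 1 (gradient f) :=
  (InnerProductSpace.toDual ℝ E).symm.contDiff.comp (hf.fderiv_right (by norm_num))

theorem inner_fderiv_gradient_apply (y u v : E) :
    ⟪fderiv ℝ (gradient f) y u, v⟫ = fderiv ℝ (fderiv ℝ f) y u v := by
  change ⟪fderiv ℝ ((InnerProductSpace.toDual ℝ E).symm ∘ fderiv ℝ f) y u, v⟫ = _
  rw [LinearIsometryEquiv.comp_fderiv]
  exact InnerProductSpace.toDual_symm_apply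

theorem inner_fderiv_gradient_comm (hf : ContDiff ℝ 2 f) (y u v : E) :
    ⟪fderiv ℝ (gradient f) y u, v⟫ = ⟪fderiv ℝ (gradient f) y v, u⟫ := by
  rw [inner_fderiv_gradient_apply, inner_fderiv_gradient_apply]
  exact hf.contDiffAt.isSymmSndFDerivAt (by simp) u v

theorem inner_intervalIntegral_apply {F : ℝ → E →L[ℝ] E} (hF : Continuous F) (s t : ℝ)
    (u v : E) : ⟪(∫ τ in s..t, F τ) u, v⟫ = ∫ τ in s..t, ⟪F τ u, v⟫ := by
  rw [ContinuousLinearMap.intervalIntegral_apply (hF.intervalIntegrable s t), real_inner_comm,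
    ← innerSL_apply_apply ℝ, ← ContinuousLinearMap.intervalIntegral_comp_comm _
      ((hF.clm_apply continuous_const).intervalIntegrable s t)]
  simp only [innerSL_apply_apply, real_inner_comm]

theorem gradient_sub_eq_intervalIntegral_apply (hf : ContDiff ℝ 2 f) (x y : E) :
    gradient f y - gradient f x
      = (∫ t in (0 : ℝ)..1, fderiv ℝ (gradient f) (x + t • (y - x))) (y - x) := by
  have hg := hf.gradient_of_two
  have hH : Continuous fun t : ℝ => fderiv ℝ (gradient f) (x + t • (y - x)) :=
    (hg.continuous_fderiv one_ne_zero).comp (by fun_prop)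
  rw [ContinuousLinearMap.intervalIntegral_apply (hH.intervalIntegrable 0 1)]
  have hderiv : ∀ t : ℝ, HasDerivAt (fun s : ℝ => gradient f (x + s • (y - x)))
      (fderiv ℝ (gradient f) (x + t • (y - x)) (y - x)) t := fun t =>
    ((hg.differentiable one_ne_zero _).hasFDerivAt).comp_hasDerivAt t
      (((hasDerivAt_id t).smul_const (y - x)).const_add x |>.congr_deriv (one_smul ℝ _))
  rw [intervalIntegral.integral_eq_sub_of_hasDerivAt (fun t _ => hderiv t)
    ((hH.clm_apply continuous_const).intervalIntegrable 0 1)]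
  simp

theorem exists_gradient_sub_eq_apply {μ L : ℝ} (hf : ContDiff ℝ 2 f)
    (hHess : ∀ x v : E, μ * ‖v‖ ^ 2 ≤ ⟪fderiv ℝ (gradient f) x v, v⟫ ∧
      ⟪fderiv ℝ (gradient f) x v, v⟫ ≤ L * ‖v‖ ^ 2) (x y : E) :
    ∃ T : E →ₗ[ℝ] E, gradient f y - gradient f x = T (y - x) ∧ μ • 1 ≤ T ∧ T ≤ L • 1 := by
  set H : ℝ → E →L[ℝ] E := fun t => fderiv ℝ (gradient f) (x + t • (y - x))
  have hH : Continuous H :=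
    (hf.gradient_of_two.continuous_fderiv one_ne_zero).comp (by fun_prop)
  have hint : ∀ u v : E, IntervalIntegrable (fun t => ⟪H t u, v⟫) MeasureTheory.volume 0 1 :=
    fun u v => ((hH.clm_apply continuous_const).inner continuous_const).intervalIntegrable 0 1
  have hsymm : ((∫ t in (0 : ℝ)..1, H t : E →L[ℝ] E) : E →ₗ[ℝ] E).IsSymmetric := fun u v => by
    simp only [ContinuousLinearMap.coe_coe]
    rw [inner_intervalIntegral_apply hH, real_inner_comm, inner_intervalIntegral_apply hH]
    exact intervalIntegral.integral_congr fun t _ => inner_fderiv_gradient_comm hf _ _ _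
  refine ⟨(∫ t in (0 : ℝ)..1, H t : E →L[ℝ] E), gradient_sub_eq_intervalIntegral_apply hf x y,
    ?_, ?_⟩
  · refine hsymm.smul_one_le fun v => ?_
    rw [ContinuousLinearMap.coe_coe, inner_intervalIntegral_apply hH]
    simpa using intervalIntegral.integral_mono_on zero_le_one intervalIntegrable_const
      (hint v v) fun t _ => (hHess _ v).1
  · refine hsymm.le_smul_one fun v => ?_
    rw [ContinuousLinearMap.coe_coe, inner_intervalIntegral_apply hH]
    simpa using intervalIntegral.integral_mono_on zero_le_one (hint v v)
      intervalIntegrable_const fun t _ => (hHess _ v).2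

end Hessian

theorem EuclideanSpace.sum_mul_apply_mul_apply_le {ι : Type*} [Fintype ι] {r : ι → ℝ} {R : ℝ}
    (hR : 0 ≤ R) (hr : ∀ i, |r i| ≤ R) (u v : EuclideanSpace ℝ ι) :
    ∑ i, r i * (u i * v i) ≤ R * (‖u‖ * ‖v‖) :=
  calc ∑ i, r i * (u i * v i) ≤ ∑ i, R * (‖u i‖ * ‖v i‖) := Finset.sum_le_sum fun i _ => by
        rw [Real.norm_eq_abs, Real.norm_eq_abs, ← abs_mul]
        exact (le_abs_self _).trans (abs_mul (r i) _ ▸ by gcongr; exact hr i)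
    _ = R * ∑ i, ‖u i‖ * ‖v i‖ := Finset.mul_sum _ _ _ |>.symm
    _ ≤ R * (‖u‖ * ‖v‖) := by
        rw [EuclideanSpace.norm_eq u, EuclideanSpace.norm_eq v]
        gcongr
        exact Real.sum_mul_le_sqrt_mul_sqrt _ _ _

theorem norm_sub_add_smul_mul_norm_le {E : Type*} [NormedAddCommGroup E] [NormedSpace ℝ E]
    {a b g : E} {γ : ℝ} (hγ : 0 ≤ γ) (hg : γ * ‖g‖ ≤ ‖a‖) :
    ‖b - a + (γ / 2) • g‖ * ‖b‖ ≤ 3 / 2 * (‖a‖ ^ 2 + ‖b‖ ^ 2) := by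
  have hc : ‖b - a + (γ / 2) • g‖ ≤ ‖b‖ + 3 / 2 * ‖a‖ := by
    grw [norm_add_le, norm_sub_le, norm_smul, Real.norm_of_nonneg (by positivity)]
    linarith
  nlinarith [mul_le_mul_of_nonneg_right hc (norm_nonneg b), sq_nonneg (2 * ‖a‖ - ‖b‖)]

theorem abs_mul_exp_neg_two_mul_sub_one_sub_le {φ m t : ℝ} (hm : 0 < m) (hmφ : m ≤ φ)
    (ht : 0 ≤ t) : |φ * (Real.exp (-2 * t) - 1 - -2 * t)| ≤ 2 * (φ * t) ^ 2 / m := by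
  have hφ : 0 < φ := hm.trans_le hmφ
  have hexp := Real.abs_exp_sub_one_sub_id_le_of_nonpos (x := -2 * t) (by linarith)
  calc |φ * (Real.exp (-2 * t) - 1 - -2 * t)| ≤ φ * ((-2 * t) ^ 2 / 2) := by
        rw [abs_mul, abs_of_pos hφ]; gcongr
    _ = 2 * (φ * t) ^ 2 / φ := by field_simp
    _ ≤ 2 * (φ * t) ^ 2 / m := by gcongr

theorem mul_cross_term_coord_eq {φ t h γ a b g : ℝ} (hφt : φ * t = h) :
    φ * ((((t + Real.exp (-2 * t)) * b + (1 - t - Real.exp (-2 * t)) * a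
        - γ / 2 * (1 - Real.exp (-2 * t)) * g) - b) * b + (((1 - t) * a + t * b) - a) * a)
      = -h * ((b - a) ^ 2 + γ * (g * b))
        + φ * (Real.exp (-2 * t) - 1 - -2 * t) * ((b - a + γ / 2 * g) * b) := by
  rw [← hφt]; ring

theorem weighted_cross_term_bound_general
    (d : ℕ) (μ L γ h : ℝ) (hμ : 0 < μ) (hμL : μ ≤ L)
    (hγ : 0 < γ) (hγL : γ ≤ 1 / L) (hh : 0 < h)
    (f : EuclideanSpace ℝ (Fin d) → ℝ) (hf : ContDiff ℝ 2 f)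
    (hHess : ∀ x v : EuclideanSpace ℝ (Fin d),
      μ * ‖v‖ ^ 2 ≤ ⟪fderiv ℝ (gradient f) x v, v⟫ ∧
        ⟪fderiv ℝ (gradient f) x v, v⟫ ≤ L * ‖v‖ ^ 2)
    (φ : Fin d → ℝ) (hφ : ∀ i, 0 < φ i)
    (hs : Fin d → ℝ) (hhs : ∀ i, hs i = h / φ i)
    (x xt a b g : EuclideanSpace ℝ (Fin d))
    (ha : a = xt - x)
    (hg : g = gradient f xt - gradient f x)
    (A C K : Fin d → ℝ)
    (hA : ∀ i, A i = (hs i + Real.exp (-2 * hs i)) * b i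
      + (1 - hs i - Real.exp (-2 * hs i)) * a i
      - γ / 2 * (1 - Real.exp (-2 * hs i)) * g i)
    (hC : ∀ i, C i = (1 - hs i) * a i + hs i * b i)
    (hK : ∀ i, K i = (A i - b i) * b i + (C i - a i) * a i) :
    ∑ i, φ i * K i
      ≤ (-(γ * μ * h / 2) + 3 * h ^ 2 / (⨅ i, φ i)) * (‖a‖ ^ 2 + ‖b‖ ^ 2) := by
  have hγL' : γ * L ≤ 1 := by rwa [le_div_iff₀ (hμ.trans_le hμL)] at hγL
  obtain ⟨T, hgT, hμT, hTL⟩ := exists_gradient_sub_eq_apply hf hHess x xt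
  rw [← ha, ← hg] at hgT
  set m := ⨅ i, φ i
  set r : Fin d → ℝ := fun i => φ i * (Real.exp (-2 * hs i) - 1 - -2 * hs i)
  have hφs : ∀ i, φ i * hs i = h := fun i => by rw [hhs i, mul_div_cancel₀ _ (hφ i).ne']
  have hsum : ∑ i, φ i * K i
      = -h * (‖b - a‖ ^ 2 + γ * ⟪g, b⟫) + ∑ i, r i * ((b - a + (γ / 2) • g) i * b i) := by
    simp only [hK, hA, hC, mul_cross_term_coord_eq (hφs _), Finset.sum_add_distrib,
      ← Finset.mul_sum, EuclideanSpace.real_norm_sq_eq, PiLp.inner_apply]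
    simp [r, mul_comm]
  have hr : ∀ i, |r i| ≤ 2 * h ^ 2 / m := fun i => by
    have : Nonempty (Fin d) := ⟨i⟩
    obtain ⟨j, hj⟩ := exists_eq_ciInf_of_finite (f := φ)
    simpa only [hφs] using abs_mul_exp_neg_two_mul_sub_one_sub_le (hj ▸ hφ j)
      (ciInf_le (Finite.bddBelow_range φ) i) (t := hs i) (hhs i ▸ div_nonneg hh.le (hφ i).le)
  have hm : 0 ≤ m := Real.iInf_nonneg fun i => (hφ i).le
  have hγg : γ * ‖g‖ ≤ ‖a‖ := by
    rw [hgT]; nlinarith [T.norm_apply_le_of_le_smul_one hμ.le hμL hμT hTL a, norm_nonneg a]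
  have hcontr := hgT ▸
    T.mul_norm_sq_add_norm_sq_le_norm_sub_sq_add_inner hμ.le hμL hγ.le hγL' hμT hTL a b
  have hrem := EuclideanSpace.sum_mul_apply_mul_apply_le (by positivity) hr
    (b - a + (γ / 2) • g) b
  have hc := norm_sub_add_smul_mul_norm_le (b := b) hγ.le hγg
  rw [hsum]
  linear_combination hrem + mul_le_mul_of_nonneg_left hc (by positivity : 0 ≤ 2 * h ^ 2 / m)
    + mul_le_mul_of_nonneg_left hcontr hh.le

/-- Key contraction lemma for RC-ULMC: with `f` `C²`, `μI ⪯ ∇²f ⪯ LI`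
(`0 < μ ≤ L`), `0 < γ ≤ 1/L`, probabilities `φ_i > 0` summing to `1`,
stepsizes `h_i = h/φ_i ≤ 1/20`, and the per-coordinate drift quantities
`A_i, C_i, K_i` of the one-step update in the coupled coordinates, one has
`∑ i, φ_i K_i ≤ (−γμh/2 + 3h²/min_i φ_i)(‖a‖² + ‖b‖²)`. -/
theorem weighted_cross_term_bound
    (d : ℕ) (hd : 0 < d) (μ L γ h : ℝ) (hμ : 0 < μ) (hμL : μ ≤ L)
    (hγ : 0 < γ) (hγL : γ ≤ 1 / L) (hh : 0 < h)
    (f : EuclideanSpace ℝ (Fin d) → ℝ) (hf : ContDiff ℝ 2 f)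
    (hHess : ∀ x v : EuclideanSpace ℝ (Fin d),
      μ * ‖v‖ ^ 2 ≤ ⟪fderiv ℝ (gradient f) x v, v⟫ ∧
        ⟪fderiv ℝ (gradient f) x v, v⟫ ≤ L * ‖v‖ ^ 2)
    (φ : Fin d → ℝ) (hφ : ∀ i, 0 < φ i) (hφ1 : ∑ i, φ i = 1)
    (hsmall : ∀ i, h / φ i ≤ 1 / 20)
    (hs : Fin d → ℝ) (hhs : ∀ i, hs i = h / φ i)
    (x xt w wt a b g : EuclideanSpace ℝ (Fin d))
    (ha : a = xt - x) (hb : b = wt - w)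
    (hg : g = gradient f xt - gradient f x)
    (A C K : Fin d → ℝ)
    (hA : ∀ i, A i = (hs i + Real.exp (-2 * hs i)) * b i
      + (1 - hs i - Real.exp (-2 * hs i)) * a i
      - γ / 2 * (1 - Real.exp (-2 * hs i)) * g i)
    (hC : ∀ i, C i = (1 - hs i) * a i + hs i * b i)
    (hK : ∀ i, K i = (A i - b i) * b i + (C i - a i) * a i) :
    ∑ i, φ i * K i
      ≤ (-(γ * μ * h / 2) + 3 * h ^ 2 / (⨅ i, φ i)) * (‖a‖ ^ 2 + ‖b‖ ^ 2) :=
  weighted_cross_term_bound_general d μ L γ h hμ hμL hγ hγL hh f hf hHess φ hφ hs hhs x xt a b g ha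
    hg A C K hA hC hK
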